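/- arXiv:1206.2975 — 2 statements merged into one kernel-verified Lean document; each statement's English description precedes it below -/
import Mathlib

section
/- Let T' and T'' be trees each with at least two vertices, with u a vertex of T' and v a vertex of T''. Let T_1 be the tree obtained from the disjoint union of T' and T'' by adding the edge uv, and let T_2 be the tree obtained from the disjoint union of T' and T'' by identifying u with v and then attaching one new pendant vertex to the identified vertex. Then F(T_1) < F(T_2) and F*(T_1) < F*(T_2). -/
open SimpleGraph

/-- A subtree of a graph `G` is a nonempty set of vertices inducing a connected subgraph. -/
def IsSubtree {V : Type} (G : SimpleGraph V) (s : Finset V) : Prop :=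
  s.Nonempty ∧ (G.induce (s : Set V)).Connected

/-- `F(G)`: the number of subtrees of `G`. -/
noncomputable def numSubtrees {V : Type} (G : SimpleGraph V) : ℕ :=
  {s : Finset V | IsSubtree G s}.ncard

/-- A leaf is a vertex of degree 1. -/
def IsLeaf {V : Type} (G : SimpleGraph V) (v : V) : Prop :=
  (G.neighborSet v).ncard = 1

/-- `F*(G)`: the number of subtrees of `G` containing at least one leaf of `G`. -/
noncomputable def numLeafSubtrees {V : Type} (G : SimpleGraph V) : ℕ :=
  {s : Finset V | IsSubtree G s ∧ ∃ v ∈ s, IsLeaf G v}.ncard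

/-- `f_G(v)`: the number of subtrees of `G` containing the vertex `v`. -/
noncomputable def numSubtreesContaining {V : Type} (G : SimpleGraph V) (v : V) : ℕ :=
  {s : Finset V | IsSubtree G s ∧ v ∈ s}.ncard

/-- `f*_G(v)`: the number of subtrees of `G` containing `v` and at least one leaf of `G`
different from `v`. -/
noncomputable def numLeafSubtreesContaining {V : Type} (G : SimpleGraph V) (v : V) : ℕ :=
  {s : Finset V | IsSubtree G s ∧ v ∈ s ∧ ∃ w ∈ s, w ≠ v ∧ IsLeaf G w}.ncard

/-- A finite set of edges of `G` that are pairwise non-incident. -/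
def IsMatchingSet {V : Type} (G : SimpleGraph V) (M : Finset (Sym2 V)) : Prop :=
  (M : Set (Sym2 V)) ⊆ G.edgeSet ∧
    ∀ e ∈ M, ∀ f ∈ M, e ≠ f → ∀ v : V, ¬(v ∈ e ∧ v ∈ f)

/-- The matching number: the maximum size of a set of pairwise non-incident edges. -/
noncomputable def matchingNumber {V : Type} (G : SimpleGraph V) : ℕ :=
  sSup {k | ∃ M : Finset (Sym2 V), IsMatchingSet G M ∧ M.card = k}

/-- `G` has a perfect matching: pairwise non-incident edges covering every vertex. -/
def HasPerfectMatching {V : Type} (G : SimpleGraph V) : Prop :=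
  ∃ M : Finset (Sym2 V), IsMatchingSet G M ∧ ∀ v : V, ∃ e ∈ M, v ∈ e

/-- A dominating set: every vertex outside `S` has a neighbour in `S`. -/
def IsDominating {V : Type} (G : SimpleGraph V) (S : Set V) : Prop :=
  ∀ v : V, v ∉ S → ∃ u ∈ S, G.Adj u v

/-- The domination number: the minimum size of a dominating set. -/
noncomputable def dominationNumber {V : Type} (G : SimpleGraph V) : ℕ :=
  sInf {k | ∃ S : Finset V, IsDominating G (S : Set V) ∧ S.card = k}

/-- The tree `A(n,q)`: a center vertex adjacent to `n - 2q + 1` leaves and to the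
midpoints of `q - 1` pendant paths of length 2. -/
def treeA (n q : ℕ) : SimpleGraph (Unit ⊕ Fin (n - 2 * q + 1) ⊕ Fin (q - 1) ⊕ Fin (q - 1)) :=
  SimpleGraph.fromRel fun x y =>
    match x, y with
    | Sum.inl _, Sum.inr (Sum.inl _) => True
    | Sum.inl _, Sum.inr (Sum.inr (Sum.inl _)) => True
    | Sum.inr (Sum.inr (Sum.inl i)), Sum.inr (Sum.inr (Sum.inr j)) => i = j
    | _, _ => False

/-- The corona `G ∘ K₁`: attach one new pendant vertex to each vertex of `G`. -/
def corona {V : Type} (G : SimpleGraph V) : SimpleGraph (V ⊕ V) :=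
  SimpleGraph.fromRel fun x y =>
    match x, y with
    | Sum.inl a, Sum.inl b => G.Adj a b
    | Sum.inl a, Sum.inr b => a = b
    | _, _ => False

/-- `P₄(1^a, 1^b)`: a path on 4 vertices with `a` pendant vertices attached to one
endvertex and `b` pendant vertices attached to the other endvertex. -/
def treeP4 (a b : ℕ) : SimpleGraph (Fin 4 ⊕ Fin a ⊕ Fin b) :=
  SimpleGraph.fromRel fun x y =>
    match x, y with
    | Sum.inl i, Sum.inl j => (j : ℕ) = (i : ℕ) + 1
    | Sum.inl i, Sum.inr (Sum.inl _) => i = 0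
    | Sum.inl i, Sum.inr (Sum.inr _) => i = 3
    | _, _ => False

/-- The broom `T_{n,Δ}`: a path on `n - Δ + 1` vertices with `Δ - 1` pendant vertices
attached to one endvertex. -/
def broom (n Δ : ℕ) : SimpleGraph (Fin (n - Δ + 1) ⊕ Fin (Δ - 1)) :=
  SimpleGraph.fromRel fun x y =>
    match x, y with
    | Sum.inl i, Sum.inl j => (j : ℕ) = (i : ℕ) + 1
    | Sum.inl i, Sum.inr _ => (i : ℕ) = 0
    | _, _ => False

/-- `T'_{n,Δ}`: a path on `n - 2Δ + 3` vertices with `Δ - 2` pendant paths of length 2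
and one pendant edge attached to one endvertex of the path. -/
def treeT' (n Δ : ℕ) :
    SimpleGraph (Fin (n - 2 * Δ + 3) ⊕ Fin (Δ - 2) ⊕ Fin (Δ - 2) ⊕ Unit) :=
  SimpleGraph.fromRel fun x y =>
    match x, y with
    | Sum.inl i, Sum.inl j => (j : ℕ) = (i : ℕ) + 1
    | Sum.inl i, Sum.inr (Sum.inl _) => (i : ℕ) = 0
    | Sum.inr (Sum.inl i), Sum.inr (Sum.inr (Sum.inl j)) => i = j
    | Sum.inl i, Sum.inr (Sum.inr (Sum.inr _)) => (i : ℕ) = 0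
    | _, _ => False

/-- The spider with `i` legs of length `l` and `j` legs of length `L`. -/
def spider (i l j L : ℕ) : SimpleGraph (Unit ⊕ (Fin i × Fin l) ⊕ (Fin j × Fin L)) :=
  SimpleGraph.fromRel fun x y =>
    match x, y with
    | Sum.inl _, Sum.inr (Sum.inl (_, t)) => (t : ℕ) = 0
    | Sum.inl _, Sum.inr (Sum.inr (_, t)) => (t : ℕ) = 0
    | Sum.inr (Sum.inl (a, s)), Sum.inr (Sum.inl (b, t)) => a = b ∧ (t : ℕ) = (s : ℕ) + 1
    | Sum.inr (Sum.inr (a, s)), Sum.inr (Sum.inr (b, t)) => a = b ∧ (t : ℕ) = (s : ℕ) + 1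
    | _, _ => False

/-- `Ť_{n,k}^d`: a path `v_1 v_2 … v_{d+1}` on `d + 1` vertices with `n - d - 1`
pendant vertices attached to the vertex `v_k` (`1 ≤ k ≤ d + 1`). -/
def treeHat (n d k : ℕ) : SimpleGraph (Fin (d + 1) ⊕ Fin (n - d - 1)) :=
  SimpleGraph.fromRel fun x y =>
    match x, y with
    | Sum.inl i, Sum.inl j => (j : ℕ) = (i : ℕ) + 1
    | Sum.inl i, Sum.inr _ => (i : ℕ) + 1 = k
    | _, _ => False

/-- The tree obtained from the disjoint union of `T` and a rooted tree `X` by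
identifying the root `u` of `X` with the vertex `x` of `T`. -/
def graft {A B : Type} (T : SimpleGraph A) (X : SimpleGraph B) (x : A) (u : B) :
    SimpleGraph (A ⊕ {b : B // b ≠ u}) :=
  SimpleGraph.fromRel fun p q =>
    match p, q with
    | Sum.inl a, Sum.inl b => T.Adj a b
    | Sum.inr a, Sum.inr b => X.Adj (a : B) (b : B)
    | Sum.inl a, Sum.inr b => a = x ∧ X.Adj u (b : B)
    | Sum.inr _, Sum.inl _ => False

/-- The tree obtained from the disjoint union of `G` and `H` by adding the edge `uv`. -/
def joinByEdge {A B : Type} (G : SimpleGraph A) (H : SimpleGraph B) (u : A) (v : B) :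
    SimpleGraph (A ⊕ B) :=
  SimpleGraph.fromRel fun p q =>
    match p, q with
    | Sum.inl a, Sum.inl b => G.Adj a b
    | Sum.inr a, Sum.inr b => H.Adj a b
    | Sum.inl a, Sum.inr b => a = u ∧ b = v
    | Sum.inr _, Sum.inl _ => False

/-- The graph obtained from `G` by attaching one new pendant vertex to `x`. -/
def attachPendant {A : Type} (G : SimpleGraph A) (x : A) : SimpleGraph (A ⊕ Unit) :=
  SimpleGraph.fromRel fun p q =>
    match p, q with
    | Sum.inl a, Sum.inl b => G.Adj a b
    | Sum.inl a, Sum.inr _ => a = x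
    | _, _ => False

/-!
Contracting the bridge `uv` of `T₁` onto `u` sends every subtree of `T₁` to a subtree of `T₂`.
A subtree missing `u` or `v` lies on one side of the bridge (the only edge between the sides),
so the contraction is injective there; a subtree containing both is recovered from its
contraction and is marked by adding the pendant vertex; the subtree `{v}`, whose contraction
is `{u}`, goes to the pendant vertex alone. Since `T'` and `T''` have at least two vertices,
`u` and `v` are not leaves of `T₁`, and every other leaf of `T₁` stays a leaf of `T₂`, so
subtrees containing a leaf go to subtrees containing a leaf. The injection misses `T'` plus
one neighbour of `v`: it contains a leaf of `T'`, meets both sides, and avoids the pendant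
vertex.
-/

namespace SimpleGraph

variable {V W : Type*} {G : SimpleGraph V} {H : SimpleGraph W}

theorem Reachable.map_of_adj_or_eq (f : V → W)
    (hf : ∀ a b, G.Adj a b → H.Adj (f a) (f b) ∨ f a = f b) {x y : V} (h : G.Reachable x y) :
    H.Reachable (f x) (f y) := by
  rw [reachable_iff_reflTransGen] at h ⊢
  refine Relation.ReflTransGen.lift' f (fun a b hab => ?_) _ _ h
  rcases hf a b hab with hadj | heq
  · exact .single hadj
  · show Relation.ReflTransGen H.Adj (f a) (f b)
    exact heq ▸ Relation.ReflTransGen.refl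

theorem Connected.induce_range_of_adj_or_eq (f : V → W)
    (hf : ∀ a b, G.Adj a b → H.Adj (f a) (f b) ∨ f a = f b) (hG : G.Connected) :
    (H.induce (Set.range f)).Connected where
  preconnected := by
    rintro ⟨_, a, rfl⟩ ⟨_, b, rfl⟩
    exact (hG a b).map_of_adj_or_eq (Set.rangeFactorization f)
      fun a b hab => (hf a b hab).imp id Subtype.ext
  nonempty := hG.nonempty.map (Set.rangeFactorization f)

theorem Connected.induce_image_of_adj_or_eq (f : V → W)
    (hf : ∀ a b, G.Adj a b → H.Adj (f a) (f b) ∨ f a = f b) {s : Set V}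
    (hs : (G.induce s).Connected) : (H.induce (f '' s)).Connected := by
  rw [Set.image_eq_range]
  exact hs.induce_range_of_adj_or_eq _ fun a b hab => hf a b hab

theorem connected_induce_insert {s : Set V} {x y : V} (hs : (G.induce s).Connected) (hx : x ∈ s)
    (hxy : G.Adj x y) : (G.induce (insert y s)).Connected := by
  rw [Set.insert_eq, Set.union_comm]
  exact connected_induce_union hs.preconnected (by simp) hx rfl hxy

theorem exists_adj_of_connected_induce {s t : Set V} (hs : (G.induce s).Connected) {x y : V}
    (hxs : x ∈ s) (hxt : x ∈ t) (hys : y ∈ s) (hyt : y ∉ t) :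
    ∃ a ∈ s, a ∈ t ∧ ∃ b ∈ s, b ∉ t ∧ G.Adj a b := by
  obtain ⟨p⟩ := hs.preconnected ⟨x, hxs⟩ ⟨y, hys⟩
  obtain ⟨d, -, hd, hd'⟩ := p.exists_boundary_dart {z | z.1 ∈ t} hxt hyt
  exact ⟨_, d.fst.2, hd, _, d.snd.2, hd', d.adj⟩

theorem Connected.exists_adj [Nontrivial V] (hG : G.Connected) (x : V) : ∃ y, G.Adj x y := by
  simpa [IsIsolated] using hG.preconnected.not_isIsolated x

end SimpleGraph

theorem Set.ncard_lt_ncard_of_injOn {α β : Type*} {s : Set α} {t : Set β} (f : α → β)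
    (hf : ∀ a ∈ s, f a ∈ t) (hinj : InjOn f s) {b : β} (hbt : b ∈ t) (hbs : b ∉ f '' s)
    (ht : t.Finite := by toFinite_tac) : s.ncard < t.ncard := by
  rw [← hinj.ncard_image]
  exact ncard_lt_ncard ((ssubset_iff_of_subset (image_subset_iff.2 hf)).2 ⟨b, hbt, hbs⟩) ht

section Leaves

variable {V : Type} {G : SimpleGraph V}

theorem isLeaf_iff_degree_eq_one {v : V} [Fintype (G.neighborSet v)] :
    IsLeaf G v ↔ G.degree v = 1 := by
  rw [IsLeaf, ← Nat.card_coe_set_eq, Nat.card_eq_fintype_card, card_neighborSet_eq_degree]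

theorem SimpleGraph.IsTree.exists_isLeaf_ne [Finite V] [Nontrivial V] (h : G.IsTree) (u : V) :
    ∃ ℓ, ℓ ≠ u ∧ IsLeaf G ℓ := by
  classical
  have := Fintype.ofFinite V
  obtain ⟨a, b, hab, ha, hb⟩ := h.exists_ne_and_degree_eq_one
  by_cases hau : a = u
  · exact ⟨b, hau ▸ hab.symm, isLeaf_iff_degree_eq_one.2 hb⟩
  · exact ⟨a, hau, isLeaf_iff_degree_eq_one.2 ha⟩

theorem not_isLeaf_of_adj {v x y : V} (hx : G.Adj v x) (hy : G.Adj v y) (hxy : x ≠ y) :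
    ¬ IsLeaf G v := by
  intro hv
  obtain ⟨z, hz⟩ := Set.ncard_eq_one.1 hv
  have hx' : x ∈ G.neighborSet v := hx
  have hy' : y ∈ G.neighborSet v := hy
  rw [hz] at hx' hy'
  exact hxy (hx'.trans hy'.symm)

theorem isLeaf_iff_of_neighborSet_eq_image {W : Type} {H : SimpleGraph W} {v : V} {w : W}
    (f : V → W) (hf : Set.InjOn f (G.neighborSet v))
    (hN : H.neighborSet w = f '' G.neighborSet v) : IsLeaf H w ↔ IsLeaf G v := by
  rw [IsLeaf, IsLeaf, hN, hf.ncard_image]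

end Leaves

section Constructions

variable {A B : Type} {G : SimpleGraph A} {H : SimpleGraph B} {u : A} {v : B}

@[simp] theorem joinByEdge_adj_inl_inl {a a' : A} :
    (joinByEdge G H u v).Adj (.inl a) (.inl a') ↔ G.Adj a a' := by
  simpa [joinByEdge, G.adj_comm a'] using G.ne_of_adj

@[simp] theorem joinByEdge_adj_inr_inr {b b' : B} :
    (joinByEdge G H u v).Adj (.inr b) (.inr b') ↔ H.Adj b b' := by
  simpa [joinByEdge, H.adj_comm b'] using H.ne_of_adj

@[simp] theorem joinByEdge_adj_inl_inr {a : A} {b : B} :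
    (joinByEdge G H u v).Adj (.inl a) (.inr b) ↔ a = u ∧ b = v := by
  simp [joinByEdge]

@[simp] theorem joinByEdge_adj_inr_inl {a : A} {b : B} :
    (joinByEdge G H u v).Adj (.inr b) (.inl a) ↔ a = u ∧ b = v := by
  simp [joinByEdge]

@[simp] theorem graft_adj_inl_inl {a a' : A} :
    (graft G H u v).Adj (.inl a) (.inl a') ↔ G.Adj a a' := by
  simpa [graft, G.adj_comm a'] using G.ne_of_adj

@[simp] theorem graft_adj_inr_inr {b b' : {b // b ≠ v}} :
    (graft G H u v).Adj (.inr b) (.inr b') ↔ H.Adj b b' := by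
  simpa [graft, H.adj_comm b'] using fun h e => H.ne_of_adj h (congrArg Subtype.val e)

@[simp] theorem graft_adj_inl_inr {a : A} {b : {b // b ≠ v}} :
    (graft G H u v).Adj (.inl a) (.inr b) ↔ a = u ∧ H.Adj v b := by
  simp [graft]

@[simp] theorem graft_adj_inr_inl {a : A} {b : {b // b ≠ v}} :
    (graft G H u v).Adj (.inr b) (.inl a) ↔ a = u ∧ H.Adj v b := by
  simp [graft]

@[simp] theorem attachPendant_adj_inl_inl {a a' : A} :
    (attachPendant G u).Adj (.inl a) (.inl a') ↔ G.Adj a a' := by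
  simpa [attachPendant, G.adj_comm a'] using G.ne_of_adj

@[simp] theorem attachPendant_adj_inl_inr {a : A} {z : Unit} :
    (attachPendant G u).Adj (.inl a) (.inr z) ↔ a = u := by
  simp [attachPendant]

end Constructions

section JoinByEdge

variable {A B : Type} {T' : SimpleGraph A} {T'' : SimpleGraph B} {u : A} {v : B}
  {S S' : Finset (A ⊕ B)}

local notation "T₁" => joinByEdge T' T'' u v
local notation "T₂" => attachPendant (graft T' T'' u v) (Sum.inl u)

theorem inl_mem_and_inr_mem_of_connected_induce {s : Set (A ⊕ B)}
    (hs : ((T₁).induce s).Connected) {a : A} {b : B} (ha : .inl a ∈ s) (hb : .inr b ∈ s) :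
    .inl u ∈ s ∧ .inr v ∈ s := by
  obtain ⟨x, hxs, ⟨a', rfl⟩, y, hys, hy, hxy⟩ :=
    exists_adj_of_connected_induce hs ha (Set.mem_range_self a) hb (by simp)
  obtain ⟨b', rfl⟩ : ∃ b', y = .inr b' := by cases y <;> simp_all
  obtain ⟨rfl, rfl⟩ := joinByEdge_adj_inl_inr.1 hxy
  exact ⟨hxs, hys⟩

theorem not_inl_mem_and_inr_mem_neighborSet (x : A ⊕ B) :
    ¬(.inl u ∈ (T₁).neighborSet x ∧ .inr v ∈ (T₁).neighborSet x) := by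
  rcases x with a | b
  · simpa using fun h => h.ne
  · simpa using fun e h => h.ne e

theorem neighborSet_joinByEdge_inl {a : A} (ha : a ≠ u) :
    (T₁).neighborSet (.inl a) = .inl '' T'.neighborSet a := by
  ext (a' | b) <;> simp [ha]

theorem not_isLeaf_joinByEdge_inl_self {a : A} (ha : T'.Adj u a) : ¬IsLeaf T₁ (.inl u) :=
  not_isLeaf_of_adj (x := .inl a) (y := .inr v) (by simpa) (by simp) (by simp)

theorem not_isLeaf_joinByEdge_inr_self {b : B} (hb : T''.Adj v b) : ¬IsLeaf T₁ (.inr v) :=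
  not_isLeaf_of_adj (x := .inr b) (y := .inl u) (by simpa) (by simp) (by simp)

variable [DecidableEq B]

variable (u v) in
def identify : A ⊕ B → (A ⊕ {b : B // b ≠ v}) ⊕ Unit
  | .inl a => .inl (.inl a)
  | .inr b => if h : b = v then .inl (.inl u) else .inl (.inr ⟨b, h⟩)

@[simp] theorem identify_inl (a : A) : identify u v (.inl a) = .inl (.inl a) := rfl

@[simp] theorem identify_inr_self : identify u v (.inr v) = .inl (.inl u) := by
  simp [identify]

theorem identify_inr_of_ne {b : B} (hb : b ≠ v) :
    identify u v (.inr b) = .inl (.inr ⟨b, hb⟩) := by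
  simp [identify, hb]

@[simp] theorem identify_ne_inr (x : A ⊕ B) (z : Unit) : identify u v x ≠ .inr z := by
  rcases x with a | b
  · simp
  · by_cases hb : b = v <;> simp [identify, hb]

@[simp] theorem inr_ne_identify (x : A ⊕ B) (z : Unit) : .inr z ≠ identify u v x :=
  (identify_ne_inr x z).symm

@[simp] theorem identify_inr_eq_inl_inl {a : A} {b : B} :
    identify u v (.inr b) = .inl (.inl a) ↔ b = v ∧ u = a := by
  by_cases hb : b = v <;> simp [identify, hb]

@[simp] theorem identify_inr_eq_inl_inr {b : B} {b' : {b // b ≠ v}} :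
    identify u v (.inr b) = .inl (.inr b') ↔ b = b' := by
  by_cases hb : b = v
  · simp [hb, b'.2.symm]
  · simp [identify, hb, Subtype.ext_iff]

theorem identify_eq_identify {x y : A ⊕ B} (h : identify u v x = identify u v y) :
    x = y ∨ (x = .inl u ∧ y = .inr v) ∨ (x = .inr v ∧ y = .inl u) := by
  rcases x with a | b <;> rcases y with a' | b' <;> simp only [identify] at h <;>
    (try split_ifs at h) <;> simp_all

theorem identify_injOn {s : Set (A ⊕ B)} (hs : ¬(.inl u ∈ s ∧ .inr v ∈ s)) :
    Set.InjOn (identify u v) s := by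
  intro x hx y hy h
  rcases identify_eq_identify h with h | ⟨rfl, rfl⟩ | ⟨rfl, rfl⟩ <;> tauto

theorem identify_adj_or_eq {x y : A ⊕ B} (h : (T₁).Adj x y) :
    (T₂).Adj (identify u v x) (identify u v y) ∨ identify u v x = identify u v y := by
  rcases x with a | b <;> rcases y with a' | b'
  · simp_all
  · obtain ⟨rfl, rfl⟩ := joinByEdge_adj_inl_inr.1 h; simp
  · obtain ⟨rfl, rfl⟩ := joinByEdge_adj_inr_inl.1 h; simp
  · left
    rw [joinByEdge_adj_inr_inr] at h
    by_cases hb : b = v <;> by_cases hb' : b' = v <;>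
      simp_all [identify_inr_of_ne, T''.adj_comm]

theorem neighborSet_identify {x : A ⊕ B} (hxu : x ≠ .inl u) (hxv : x ≠ .inr v) :
    (T₂).neighborSet (identify u v x) = identify u v '' (T₁).neighborSet x := by
  rcases x with a | b
  · have ha : a ≠ u := fun h => hxu (h ▸ rfl)
    ext ((a' | b') | z) <;> simp [ha]
  · have hb : b ≠ v := fun h => hxv (h ▸ rfl)
    rw [identify_inr_of_ne hb]
    ext ((a' | b') | z) <;> simp [hb, T''.adj_comm v, eq_comm, and_comm]

theorem isLeaf_identify_iff {x : A ⊕ B} (hxu : x ≠ .inl u) (hxv : x ≠ .inr v) :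
    IsLeaf T₂ (identify u v x) ↔ IsLeaf T₁ x :=
  isLeaf_iff_of_neighborSet_eq_image _ (identify_injOn (not_inl_mem_and_inr_mem_neighborSet x))
    (neighborSet_identify hxu hxv)

variable [DecidableEq A]

theorem mem_of_identify_mem_image {x : A ⊕ B}
    (hxu : x ≠ .inl u) (hxv : x ≠ .inr v) (h : identify u v x ∈ S.image (identify u v)) :
    x ∈ S := by
  obtain ⟨y, hy, hyx⟩ := Finset.mem_image.1 h
  rcases identify_eq_identify hyx with rfl | ⟨-, rfl⟩ | ⟨-, rfl⟩
  exacts [hy, absurd rfl hxv, absurd rfl hxu]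

variable (u v) in
def embedSubtree (S : Finset (A ⊕ B)) : Finset ((A ⊕ {b : B // b ≠ v}) ⊕ Unit) :=
  if S = {.inr v} then {.inr ()}
  else if .inl u ∈ S ∧ .inr v ∈ S then insert (.inr ()) (S.image (identify u v))
  else S.image (identify u v)

theorem image_identify_subset_embedSubtree (hS : S ≠ {.inr v}) :
    S.image (identify u v) ⊆ embedSubtree u v S := by
  rw [embedSubtree, if_neg hS]
  split_ifs <;> simp

theorem inr_mem_embedSubtree_iff (hS : S ≠ {.inr v}) :
    .inr () ∈ embedSubtree u v S ↔ .inl u ∈ S ∧ .inr v ∈ S := by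
  rw [embedSubtree, if_neg hS]
  split_ifs <;> simp_all

theorem erase_inr_embedSubtree (hS : S ≠ {.inr v}) :
    (embedSubtree u v S).erase (.inr ()) = S.image (identify u v) := by
  rw [embedSubtree, if_neg hS]
  split_ifs <;> simp

theorem embedSubtree_eq_singleton_iff : embedSubtree u v S = {.inr ()} ↔ S = {.inr v} := by
  refine ⟨fun h => ?_, fun h => by simp [embedSubtree, h]⟩
  by_contra hS
  have himage := erase_inr_embedSubtree (u := u) hS
  rw [h, Finset.erase_singleton, eq_comm, Finset.image_eq_empty] at himage
  simp [embedSubtree, himage] at h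

theorem isSubtree_embedSubtree (hS : IsSubtree T₁ S) : IsSubtree T₂ (embedSubtree u v S) := by
  have himage := hS.2.induce_image_of_adj_or_eq (identify u v) fun _ _ => identify_adj_or_eq
  unfold embedSubtree
  split_ifs with hv hflag
  · refine ⟨Finset.singleton_nonempty _, ?_⟩
    rw [Finset.coe_singleton, induce_singleton_eq_top]
    exact connected_top
  · refine ⟨Finset.insert_nonempty _ _, ?_⟩
    rw [Finset.coe_insert, Finset.coe_image]
    exact connected_induce_insert himage ⟨_, hflag.1, rfl⟩ (by simp)
  · exact ⟨hS.1.image _, by rwa [Finset.coe_image]⟩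

theorem eq_singleton_of_image_identify_eq (hS : ((T₁).induce S).Connected)
    (hS' : ((T₁).induce S').Connected) (hSf : ¬(.inl u ∈ S ∧ .inr v ∈ S))
    (hS'f : ¬(.inl u ∈ S' ∧ .inr v ∈ S')) (hu : .inl u ∈ S) (hv : .inr v ∈ S')
    (h : S.image (identify u v) = S'.image (identify u v)) : S' = {.inr v} := by
  refine Finset.eq_singleton_iff_unique_mem.2 ⟨hv, fun y hy => ?_⟩
  rcases y with a | b
  · exact absurd (inl_mem_and_inr_mem_of_connected_induce hS' hy hv) hS'f
  by_cases hb : b = v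
  · rw [hb]
  have hbS : .inr b ∈ S := mem_of_identify_mem_image (by simp) (by simpa)
    (h ▸ Finset.mem_image_of_mem _ hy)
  exact absurd (inl_mem_and_inr_mem_of_connected_induce hS hu hbS) hSf

theorem subset_of_image_identify_eq (hS : IsSubtree T₁ S) (hS' : IsSubtree T₁ S')
    (hSv : S ≠ {.inr v}) (hS'v : S' ≠ {.inr v})
    (hflag : .inl u ∈ S ∧ .inr v ∈ S ↔ .inl u ∈ S' ∧ .inr v ∈ S')
    (h : S.image (identify u v) = S'.image (identify u v)) : S ⊆ S' := by
  intro x hx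
  obtain ⟨y, hy, hyx⟩ := Finset.mem_image.1 (h ▸ Finset.mem_image_of_mem (identify u v) hx)
  rcases identify_eq_identify hyx with rfl | ⟨rfl, rfl⟩ | ⟨rfl, rfl⟩
  · exact hy
  · by_cases hf : .inl u ∈ S' ∧ .inr v ∈ S'
    · exact hf.2
    exact absurd (eq_singleton_of_image_identify_eq hS'.2 hS.2 hf (hflag.not.2 hf) hy hx h.symm)
      hSv
  · by_cases hf : .inl u ∈ S' ∧ .inr v ∈ S'
    · exact hf.1
    exact absurd (eq_singleton_of_image_identify_eq hS.2 hS'.2 (hflag.not.2 hf) hf hx hy h) hS'v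

theorem embedSubtree_injOn : Set.InjOn (embedSubtree u v) {S | IsSubtree T₁ S} := by
  intro S hS S' hS' h
  have hsingleton : S = {.inr v} ↔ S' = {.inr v} := by
    rw [← embedSubtree_eq_singleton_iff (u := u) (S := S),
      ← embedSubtree_eq_singleton_iff (u := u) (S := S'), h]
  by_cases hSv : S = {.inr v}
  · exact hSv.trans (hsingleton.1 hSv).symm
  have hS'v := hsingleton.not.1 hSv
  have hflag : .inl u ∈ S ∧ .inr v ∈ S ↔ .inl u ∈ S' ∧ .inr v ∈ S' := by
    rw [← inr_mem_embedSubtree_iff hSv, ← inr_mem_embedSubtree_iff hS'v, h]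
  have himage : S.image (identify u v) = S'.image (identify u v) := by
    rw [← erase_inr_embedSubtree hSv, ← erase_inr_embedSubtree hS'v, h]
  exact (subset_of_image_identify_eq hS hS' hSv hS'v hflag himage).antisymm
    (subset_of_image_identify_eq hS' hS hS'v hSv hflag.symm himage.symm)

theorem exists_isLeaf_mem_embedSubtree {a : A} {b : B} (ha : T'.Adj u a) (hb : T''.Adj v b)
    {x : A ⊕ B} (hx : x ∈ S) (hleaf : IsLeaf T₁ x) :
    ∃ y ∈ embedSubtree u v S, IsLeaf T₂ y := by
  have hxu : x ≠ .inl u := by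
    rintro rfl
    exact not_isLeaf_joinByEdge_inl_self ha hleaf
  have hxv : x ≠ .inr v := by
    rintro rfl
    exact not_isLeaf_joinByEdge_inr_self hb hleaf
  have hSv : S ≠ {.inr v} := by
    rintro rfl
    exact hxv (Finset.mem_singleton.1 hx)
  exact ⟨_, image_identify_subset_embedSubtree hSv (Finset.mem_image_of_mem _ hx),
    (isLeaf_identify_iff hxu hxv).2 hleaf⟩

theorem embedSubtree_ne_of_mem (hS : IsSubtree T₁ S)
    {W : Finset ((A ⊕ {b // b ≠ v}) ⊕ Unit)} (hW : .inr () ∉ W) {a : A} {b : B}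
    (hau : a ≠ u) (hbv : b ≠ v)
    (ha : identify u v (.inl a) ∈ W) (hb : identify u v (.inr b) ∈ W) :
    embedSubtree u v S ≠ W := by
  intro h
  have hSv : S ≠ {.inr v} := by
    rintro rfl
    apply hW
    simp [← h, embedSubtree]
  have himage : S.image (identify u v) = W := by
    rw [← erase_inr_embedSubtree hSv, h, Finset.erase_eq_of_notMem hW]
  have haS : .inl a ∈ S := mem_of_identify_mem_image (by simpa) (by simp) (himage ▸ ha)
  have hbS : .inr b ∈ S := mem_of_identify_mem_image (by simp) (by simpa) (himage ▸ hb)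
  exact hW (h ▸ (inr_mem_embedSubtree_iff hSv).2
    (inl_mem_and_inr_mem_of_connected_induce hS.2 haS hbS))

theorem exists_isSubtree_isLeaf_forall_embedSubtree_ne [Fintype A] [Nontrivial A]
    (h1 : T'.IsTree) {b : B} (hb : T''.Adj v b) :
    ∃ W, IsSubtree T₂ W ∧ (∃ y ∈ W, IsLeaf T₂ y) ∧
      ∀ S, IsSubtree T₁ S → embedSubtree u v S ≠ W := by
  have hbv : b ≠ v := hb.ne.symm
  obtain ⟨a, hau⟩ := exists_ne u
  refine ⟨insert (identify u v (.inr b)) (Finset.univ.image (identify u v ∘ .inl)),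
    ⟨by simp, ?_⟩, ?_,
    fun S hS => embedSubtree_ne_of_mem hS (by simp) hau hbv (by simp) (by simp)⟩
  · rw [Finset.coe_insert, Finset.coe_image, Finset.coe_univ, Set.image_univ]
    refine connected_induce_insert (x := identify u v (.inl u)) ?_ ⟨u, rfl⟩
      (by simpa [identify_inr_of_ne hbv] using hb)
    exact h1.connected.induce_range_of_adj_or_eq _ fun _ _ hadj => .inl (by simpa using hadj)
  · obtain ⟨ℓ, hℓu, hℓ⟩ := h1.exists_isLeaf_ne u
    refine ⟨identify u v (.inl ℓ), by simp, (isLeaf_identify_iff (by simpa) (by simp)).2 ?_⟩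
    exact (isLeaf_iff_of_neighborSet_eq_image _ Sum.inl_injective.injOn
      (neighborSet_joinByEdge_inl hℓu)).2 hℓ

end JoinByEdge

/-- Let `T₁` be obtained from disjoint trees `T'` and `T''` (each with at
least two vertices) by adding the edge `uv`, and let `T₂` be obtained by identifying `u`
with `v` and attaching a new pendant vertex to the identified vertex. Then
`F(T₁) < F(T₂)` and `F*(T₁) < F*(T₂)`. -/
theorem contract_edge_attach_pendant {A B : Type} [Fintype A] [Fintype B]
    (T' : SimpleGraph A) (T'' : SimpleGraph B) (h1 : T'.IsTree) (h2 : T''.IsTree)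
    (hA : 2 ≤ Fintype.card A) (hB : 2 ≤ Fintype.card B) (u : A) (v : B) :
    numSubtrees (joinByEdge T' T'' u v) <
        numSubtrees (attachPendant (graft T' T'' u v) (Sum.inl u)) ∧
      numLeafSubtrees (joinByEdge T' T'' u v) <
        numLeafSubtrees (attachPendant (graft T' T'' u v) (Sum.inl u)) := by
  classical
  have : Nontrivial A := Fintype.one_lt_card_iff_nontrivial.1 hA
  have : Nontrivial B := Fintype.one_lt_card_iff_nontrivial.1 hB
  obtain ⟨a, ha⟩ := h1.connected.exists_adj u
  obtain ⟨b, hb⟩ := h2.connected.exists_adj v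
  obtain ⟨W, hW, hWleaf, hWne⟩ := exists_isSubtree_isLeaf_forall_embedSubtree_ne (u := u) h1 hb
  constructor
  · exact Set.ncard_lt_ncard_of_injOn (embedSubtree u v) (fun S hS => isSubtree_embedSubtree hS)
      embedSubtree_injOn hW fun ⟨S, hS, hSW⟩ => hWne S hS hSW
  · exact Set.ncard_lt_ncard_of_injOn (embedSubtree u v)
      (fun S ⟨hS, x, hx, hleaf⟩ =>
        ⟨isSubtree_embedSubtree hS, exists_isLeaf_mem_embedSubtree ha hb hx hleaf⟩)
      (embedSubtree_injOn.mono fun S hS => hS.1) ⟨hW, hWleaf⟩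
      fun ⟨S, hS, hSW⟩ => hWne S hS.1 hSW
end

section
/- For every tree T on n ≥ 2 vertices, F(T∘K_1) = Σ_S 2^{|S|} + n and F*(T∘K_1) = Σ_S (2^{|S|} - 1) + n, where both sums range over all subtrees S of T and |S| denotes the number of vertices of S. -/
/-!
A subtree of `G ∘ K₁` is either a single pendant vertex, or a subtree `S` of `G` together with
an arbitrary set of pendant vertices attached to `S`: a pendant vertex is joined only to its
partner, so it can belong to a larger subtree only together with that partner. Hence every
subtree `S` of `G` accounts for `2 ^ |S|` subtrees of the corona, and the `n` pendant singletons
account for the rest. When `G` has no isolated vertex, the leaves of `G ∘ K₁` are exactly the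
pendant vertices, so the subtrees containing a leaf are the pendant singletons and, for each `S`,
the `2 ^ |S| - 1` choices of a nonempty set of pendant vertices.
-/

open SimpleGraph

variable {V : Type}

lemma isSubtree_singleton (G : SimpleGraph V) (v : V) : IsSubtree G {v} := by
  refine ⟨Finset.singleton_nonempty v, ?_⟩
  rw [Finset.coe_singleton, induce_singleton_eq_top]
  exact connected_top

lemma SimpleGraph.Preconnected.of_surjective_of_adj {α β : Type*} {G : SimpleGraph α}
    {H : SimpleGraph β} (hG : G.Preconnected) (f : α → β) (hf : Function.Surjective f)
    (hadj : ∀ ⦃x y⦄, G.Adj x y → f x = f y ∨ H.Adj (f x) (f y)) : H.Preconnected := by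
  intro u v
  obtain ⟨x, rfl⟩ := hf u
  obtain ⟨y, rfl⟩ := hf v
  have hxy := hG x y
  rw [reachable_iff_reflTransGen] at hxy ⊢
  refine hxy.lift' f fun a b hab => ?_
  rcases hadj hab with h | h
  · rw [Function.onFun, h]
  · exact .single h

section Corona

variable {G : SimpleGraph V} {a b : V}

@[simp] lemma corona_adj_inl_inl : (corona G).Adj (.inl a) (.inl b) ↔ G.Adj a b := by
  simpa [corona, fromRel_adj, adj_comm] using G.ne_of_adj

@[simp] lemma corona_adj_inl_inr : (corona G).Adj (.inl a) (.inr b) ↔ a = b := by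
  simp [corona, fromRel_adj]

@[simp] lemma corona_adj_inr_inl : (corona G).Adj (.inr a) (.inl b) ↔ a = b := by
  simp [corona, fromRel_adj, eq_comm]

@[simp] lemma not_corona_adj_inr_inr : ¬ (corona G).Adj (.inr a) (.inr b) := by
  simp [corona, fromRel_adj]

variable {s : Finset (V ⊕ V)}

/-- A pendant vertex `inr a` can reach the rest of a connected vertex set only through `inl a`. -/
lemma inl_mem_of_inr_mem (hs : ((corona G).induce (s : Set (V ⊕ V))).Preconnected)
    (ha : .inr a ∈ s) {x : V ⊕ V} (hx : x ∈ s) (hne : x ≠ .inr a) : .inl a ∈ s := by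
  obtain ⟨⟨y, hy⟩, hadj⟩ := (hs ⟨_, ha⟩ ⟨x, hx⟩).nonempty_neighborSet_left
    (by simpa [Subtype.ext_iff] using hne.symm)
  rcases y with b | b
  · obtain rfl : a = b := by simpa using hadj
    exact hy
  · simp at hadj

lemma toRight_subset_toLeft_of_preconnected
    (hs : ((corona G).induce (s : Set (V ⊕ V))).Preconnected) (hl : s.toLeft.Nonempty) :
    s.toRight ⊆ s.toLeft := by
  obtain ⟨c, hc⟩ := hl
  intro b hb
  rw [Finset.mem_toRight] at hb
  exact Finset.mem_toLeft.2 (inl_mem_of_inr_mem hs hb (Finset.mem_toLeft.1 hc) Sum.inl_ne_inr)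

lemma eq_singleton_inr_of_preconnected
    (hs : ((corona G).induce (s : Set (V ⊕ V))).Preconnected) (hl : s.toLeft = ∅)
    (hb : .inr b ∈ s) : s = {.inr b} := by
  refine Finset.eq_singleton_iff_unique_mem.2 ⟨hb, fun x hx => by_contra fun hne => ?_⟩
  simpa [← Finset.mem_toLeft, hl] using inl_mem_of_inr_mem hs hb hx hne

lemma preconnected_induce_corona_iff (hs : s.toRight ⊆ s.toLeft) :
    ((corona G).induce (s : Set (V ⊕ V))).Preconnected ↔
      (G.induce (s.toLeft : Set V)).Preconnected := by
  have hproj : ∀ x ∈ s, Sum.elim id id x ∈ s.toLeft := by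
    rintro (a | a) ha
    · simpa using ha
    · exact hs (by simpa using ha)
  constructor
  · intro h
    refine h.of_surjective_of_adj (fun x => ⟨Sum.elim id id x.1, hproj x.1 x.2⟩) ?_ ?_
    · rintro ⟨a, ha⟩
      exact ⟨⟨.inl a, by simpa using ha⟩, rfl⟩
    · rintro ⟨a | a, ha⟩ ⟨b | b, hb⟩ hab <;> simp_all
  · intro h
    let ι : G.induce (s.toLeft : Set V) →g (corona G).induce (s : Set (V ⊕ V)) :=
      ⟨fun a => ⟨.inl a.1, Finset.mem_toLeft.1 a.2⟩, fun hab => by simpa using hab⟩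
    have hreach : ∀ x : (s : Set (V ⊕ V)), ∃ a, ((corona G).induce _).Reachable (ι a) x := by
      rintro ⟨a | a, ha⟩
      · exact ⟨⟨a, by simpa using ha⟩, .rfl⟩
      · exact ⟨⟨a, hproj _ ha⟩, Adj.reachable (by simp [ι])⟩
    intro x y
    obtain ⟨a, hx⟩ := hreach x
    obtain ⟨b, hy⟩ := hreach y
    exact hx.symm.trans (((h a b).map ι).trans hy)

lemma isSubtree_corona_iff :
    IsSubtree (corona G) s ↔
      (∃ a, s = {.inr a}) ∨ (IsSubtree G s.toLeft ∧ s.toRight ⊆ s.toLeft) := by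
  constructor
  · rintro ⟨hne, hconn⟩
    by_cases hl : s.toLeft.Nonempty
    · have hsub := toRight_subset_toLeft_of_preconnected hconn.preconnected hl
      have : Nonempty (s.toLeft : Set V) := hl.coe_sort
      exact .inr ⟨⟨hl, ⟨(preconnected_induce_corona_iff hsub).1 hconn.preconnected⟩⟩, hsub⟩
    · obtain ⟨a | a, ha⟩ := hne
      · exact absurd ⟨a, Finset.mem_toLeft.2 ha⟩ hl
      · exact .inl ⟨a, eq_singleton_inr_of_preconnected hconn.preconnected
          (Finset.not_nonempty_iff_eq_empty.1 hl) ha⟩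
  · rintro (⟨a, rfl⟩ | ⟨⟨hl, hconn⟩, hsub⟩)
    · exact isSubtree_singleton _ _
    · obtain ⟨a, ha⟩ := hl
      have ha : .inl a ∈ s := Finset.mem_toLeft.1 ha
      have : Nonempty (s : Set (V ⊕ V)) := ⟨⟨_, ha⟩⟩
      exact ⟨⟨_, ha⟩, ⟨(preconnected_induce_corona_iff hsub).2 hconn.preconnected⟩⟩

lemma isLeaf_corona_inr (a : V) : IsLeaf (corona G) (.inr a) := by
  have : (corona G).neighborSet (.inr a) = {.inl a} := by
    ext (b | b) <;> simp [eq_comm]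
  rw [IsLeaf, this, Set.ncard_singleton]

lemma not_isLeaf_corona_inl (hab : G.Adj a b) : ¬ IsLeaf (corona G) (.inl a) := by
  intro h
  obtain ⟨x, hx⟩ := Set.ncard_eq_one.1 h
  have hr : Sum.inr a ∈ (corona G).neighborSet (.inl a) := by simp
  have hl : Sum.inl b ∈ (corona G).neighborSet (.inl a) := by simpa using hab
  rw [hx, Set.mem_singleton_iff] at hr hl
  exact Sum.inl_ne_inr (hl.trans hr.symm)

lemma exists_isLeaf_corona_mem_iff (hG : ∀ a, ¬ G.IsIsolated a) :
    (∃ v ∈ s, IsLeaf (corona G) v) ↔ s.toRight.Nonempty := by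
  constructor
  · rintro ⟨a | a, ha, hleaf⟩
    · obtain ⟨b, hab⟩ : ∃ b, G.Adj a b := by simpa [IsIsolated] using hG a
      exact absurd hleaf (not_isLeaf_corona_inl hab)
    · exact ⟨a, Finset.mem_toRight.2 ha⟩
  · rintro ⟨a, ha⟩
    exact ⟨_, Finset.mem_toRight.1 ha, isLeaf_corona_inr a⟩

end Corona

open Finset

lemma Finset.card_filter_toLeft_toRight {α β : Type*} [Fintype α] [Fintype β] [DecidableEq β]
    (P : Finset α → Prop) [DecidablePred P] (𝒬 : Finset α → Finset (Finset β)) :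
    #{u : Finset (α ⊕ β) | P u.toLeft ∧ u.toRight ∈ 𝒬 u.toLeft} = ∑ A with P A, #(𝒬 A) := by
  rw [← card_sigma]
  exact card_equiv (sumEquiv.toEquiv.trans (Equiv.sigmaEquivProd _ _).symm) (by simp)

section Counting

variable [Fintype V] (G : SimpleGraph V)

open Classical in
lemma card_filter_isSubtree_corona (Q : Finset V → Prop) (hQ : ∀ a, Q {a}) :
    #{s : Finset (V ⊕ V) | IsSubtree (corona G) s ∧ Q s.toRight} =
      ∑ A with IsSubtree G A, #{B ∈ A.powerset | Q B} + Fintype.card V := by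
  have hsplit : ({s | IsSubtree (corona G) s ∧ Q s.toRight} : Finset (Finset (V ⊕ V))) =
      ({u | IsSubtree G u.toLeft ∧ u.toRight ∈ {B ∈ u.toLeft.powerset | Q B}} :
        Finset (Finset (V ⊕ V))) ∪ univ.image fun a => {.inr a} := by
    ext s
    simp only [mem_filter, mem_univ, true_and, mem_union, mem_image, isSubtree_corona_iff,
      mem_powerset]
    constructor
    · rintro ⟨⟨a, rfl⟩ | ⟨hA, hB⟩, hQs⟩
      · exact .inr ⟨a, rfl⟩
      · exact .inl ⟨hA, hB, hQs⟩
    · rintro (⟨hA, hB, hQs⟩ | ⟨a, rfl⟩)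
      · exact ⟨.inr ⟨hA, hB⟩, hQs⟩
      · refine ⟨.inl ⟨a, rfl⟩, ?_⟩
        convert hQ a
        ext; simp
  have hdisj : Disjoint
      ({u | IsSubtree G u.toLeft ∧ u.toRight ∈ {B ∈ u.toLeft.powerset | Q B}} :
        Finset (Finset (V ⊕ V))) (univ.image fun a => {.inr a}) := by
    simp only [Finset.disjoint_left, mem_filter, mem_image]
    rintro s ⟨-, ⟨⟨a, ha⟩, -⟩, -⟩ ⟨b, -, rfl⟩
    simp at ha
  rw [hsplit, card_union_of_disjoint hdisj,
    card_filter_toLeft_toRight (IsSubtree G) fun A => {B ∈ A.powerset | Q B},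
    card_image_of_injective _ fun a b h => by simpa using h, card_univ]

lemma numSubtrees_corona :
    numSubtrees (corona G) = (∑ᶠ A ∈ {A | IsSubtree G A}, 2 ^ #A) + Fintype.card V := by
  classical
  have := card_filter_isSubtree_corona G (fun _ => True) fun _ => trivial
  simp only [and_true, filter_true, card_powerset] at this
  rw [numSubtrees, ← coe_filter_univ, Set.ncard_coe_finset, this, ← coe_filter_univ,
    finsum_mem_coe_finset]

lemma numLeafSubtrees_corona (hG : ∀ a, ¬ G.IsIsolated a) :
    numLeafSubtrees (corona G) =
      (∑ᶠ A ∈ {A | IsSubtree G A}, (2 ^ #A - 1)) + Fintype.card V := by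
  classical
  have := card_filter_isSubtree_corona G Finset.Nonempty singleton_nonempty
  simp only [← exists_isLeaf_corona_mem_iff hG] at this
  rw [numLeafSubtrees, ← coe_filter_univ, Set.ncard_coe_finset, this, ← coe_filter_univ,
    finsum_mem_coe_finset]
  congr 1
  refine sum_congr rfl fun A _ => ?_
  simp only [nonempty_iff_ne_empty, filter_ne', card_erase_of_mem (empty_mem_powerset A),
    card_powerset]

end Counting

/-- For every tree `T` on `n ≥ 2` vertices,
`F(T∘K₁) = Σ_S 2^{|S|} + n` and `F*(T∘K₁) = Σ_S (2^{|S|} - 1) + n`, where the sums range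
over all subtrees `S` of `T`. -/
theorem corona_counts {V : Type} [Fintype V] (n : ℕ) (hn : 2 ≤ n)
    (G : SimpleGraph V) (hG : G.IsTree) (hcard : Fintype.card V = n) :
    numSubtrees (corona G) =
        (∑ᶠ s ∈ {s : Finset V | IsSubtree G s}, 2 ^ s.card) + n ∧
      numLeafSubtrees (corona G) =
        (∑ᶠ s ∈ {s : Finset V | IsSubtree G s}, (2 ^ s.card - 1)) + n := by
  subst hcard
  have : Nontrivial V := Fintype.one_lt_card_iff_nontrivial.1 hn
  exact ⟨numSubtrees_corona G,
    numLeafSubtrees_corona G hG.connected.preconnected.not_isIsolated⟩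
end
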